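/- Let (η and ζ) be a solution of the conformal water-wave system with parameters γ, α, and define u = (η_x ζ_x + η_y ζ_y)/(η_x² + η_y²) + γη and v = (η_x ζ_y − η_y ζ_x)/(η_x² + η_y²). Then v is harmonic in R, v = 0 on B, and v satisfies on Γ the boundary condition u·(u·v_y − v·v_x) − η_y·(γu + α)·v = 0. -/

import Mathlib

noncomputable section

open Real MeasureTheory intervalIntegral

/-- Partial derivative in the horizontal variable. -/
noncomputable def px (f : ℝ × ℝ → ℝ) (p : ℝ × ℝ) : ℝ := fderiv ℝ f p (1, 0)

/-- Partial derivative in the vertical variable. -/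
noncomputable def py (f : ℝ × ℝ → ℝ) (p : ℝ × ℝ) : ℝ := fderiv ℝ f p (0, 1)

/-- The open horizontal strip `ℝ × (0,1)`. -/
def stripR : Set (ℝ × ℝ) := {p : ℝ × ℝ | 0 < p.2 ∧ p.2 < 1}

section WWHelpers

variable {f g : ℝ × ℝ → ℝ} {p w : ℝ × ℝ}

lemma pd_add (hf : DifferentiableAt ℝ f p) (hg : DifferentiableAt ℝ g p) (w : ℝ × ℝ) :
    fderiv ℝ (fun q => f q + g q) p w = fderiv ℝ f p w + fderiv ℝ g p w := by
  rw [fderiv_fun_add hf hg]; simp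

lemma pd_sub (hf : DifferentiableAt ℝ f p) (hg : DifferentiableAt ℝ g p) (w : ℝ × ℝ) :
    fderiv ℝ (fun q => f q - g q) p w = fderiv ℝ f p w - fderiv ℝ g p w := by
  rw [fderiv_fun_sub hf hg]; simp

lemma pd_mul (hf : DifferentiableAt ℝ f p) (hg : DifferentiableAt ℝ g p) (w : ℝ × ℝ) :
    fderiv ℝ (fun q => f q * g q) p w = fderiv ℝ f p w * g p + f p * fderiv ℝ g p w := by
  rw [fderiv_fun_mul hf hg]; simp; ring

lemma pd_div (hf : DifferentiableAt ℝ f p) (hg : DifferentiableAt ℝ g p) (hne : g p ≠ 0)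
    (w : ℝ × ℝ) :
    fderiv ℝ (fun q => f q / g q) p w
      = (fderiv ℝ f p w * g p - f p * fderiv ℝ g p w) / g p ^ 2 := by
  have hinv : HasFDerivAt (fun q => (g q)⁻¹) ((-(g p ^ 2)⁻¹) • fderiv ℝ g p) p :=
    (hasDerivAt_inv hne).comp_hasFDerivAt p hg.hasFDerivAt
  have h2 : fderiv ℝ (fun q => (g q)⁻¹) p w = -(fderiv ℝ g p w) / g p ^ 2 := by
    rw [hinv.fderiv]; simp; field_simp
  have h3 : (fun q => f q / g q) = fun q => f q * (g q)⁻¹ := by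
    funext q; rw [div_eq_mul_inv]
  rw [h3, pd_mul hf hinv.differentiableAt, h2]
  field_simp
  ring

lemma pd_cmul (c : ℝ) (hf : DifferentiableAt ℝ f p) (w : ℝ × ℝ) :
    fderiv ℝ (fun q => c * f q) p w = c * fderiv ℝ f p w := by
  rw [fderiv_const_mul hf c]; simp

lemma pd_sq (hf : DifferentiableAt ℝ f p) (w : ℝ × ℝ) :
    fderiv ℝ (fun q => f q ^ 2) p w = 2 * f p * fderiv ℝ f p w := by
  have : (fun q => f q ^ 2) = fun q => f q * f q := by funext q; ring
  rw [this, pd_mul hf hf]; ring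

end WWHelpers

section WWHelpers2

variable {f g : ℝ × ℝ → ℝ} {p : ℝ × ℝ}

lemma px_def (f : ℝ × ℝ → ℝ) (p : ℝ × ℝ) : px f p = fderiv ℝ f p (1, 0) := rfl
lemma py_def (f : ℝ × ℝ → ℝ) (p : ℝ × ℝ) : py f p = fderiv ℝ f p (0, 1) := rfl

lemma px_add (hf : DifferentiableAt ℝ f p) (hg : DifferentiableAt ℝ g p) :
    px (fun q => f q + g q) p = px f p + px g p := pd_add hf hg _
lemma py_add (hf : DifferentiableAt ℝ f p) (hg : DifferentiableAt ℝ g p) :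
    py (fun q => f q + g q) p = py f p + py g p := pd_add hf hg _
lemma px_sub (hf : DifferentiableAt ℝ f p) (hg : DifferentiableAt ℝ g p) :
    px (fun q => f q - g q) p = px f p - px g p := pd_sub hf hg _
lemma py_sub (hf : DifferentiableAt ℝ f p) (hg : DifferentiableAt ℝ g p) :
    py (fun q => f q - g q) p = py f p - py g p := pd_sub hf hg _
lemma px_mul (hf : DifferentiableAt ℝ f p) (hg : DifferentiableAt ℝ g p) :
    px (fun q => f q * g q) p = px f p * g p + f p * px g p := pd_mul hf hg _
lemma py_mul (hf : DifferentiableAt ℝ f p) (hg : DifferentiableAt ℝ g p) :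
    py (fun q => f q * g q) p = py f p * g p + f p * py g p := pd_mul hf hg _
lemma px_div (hf : DifferentiableAt ℝ f p) (hg : DifferentiableAt ℝ g p) (hne : g p ≠ 0) :
    px (fun q => f q / g q) p = (px f p * g p - f p * px g p) / g p ^ 2 := pd_div hf hg hne _
lemma py_div (hf : DifferentiableAt ℝ f p) (hg : DifferentiableAt ℝ g p) (hne : g p ≠ 0) :
    py (fun q => f q / g q) p = (py f p * g p - f p * py g p) / g p ^ 2 := pd_div hf hg hne _
lemma px_cmul (c : ℝ) (hf : DifferentiableAt ℝ f p) :
    px (fun q => c * f q) p = c * px f p := pd_cmul c hf _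
lemma py_cmul (c : ℝ) (hf : DifferentiableAt ℝ f p) :
    py (fun q => c * f q) p = c * py f p := pd_cmul c hf _
lemma px_sq (hf : DifferentiableAt ℝ f p) :
    px (fun q => f q ^ 2) p = 2 * f p * px f p := pd_sq hf _
lemma py_sq (hf : DifferentiableAt ℝ f p) :
    py (fun q => f q ^ 2) p = 2 * f p * py f p := pd_sq hf _

/-- smoothness of the partial derivatives -/
lemma contDiff_px {n : ℕ∞} (hf : ContDiff ℝ (n + 1) f) : ContDiff ℝ n (px f) := by
  have h : ContDiff ℝ n (fderiv ℝ f) := hf.fderiv_right le_rfl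
  exact h.clm_apply contDiff_const
lemma contDiff_py {n : ℕ∞} (hf : ContDiff ℝ (n + 1) f) : ContDiff ℝ n (py f) := by
  have h : ContDiff ℝ n (fderiv ℝ f) := hf.fderiv_right le_rfl
  exact h.clm_apply contDiff_const

lemma contDiff_px3 (hf : ContDiff ℝ 3 f) : ContDiff ℝ 2 (px f) := by
  have : ContDiff ℝ ((2 : ℕ∞) + 1) f := by norm_num; exact hf
  exact contDiff_px this
lemma contDiff_py3 (hf : ContDiff ℝ 3 f) : ContDiff ℝ 2 (py f) := by
  have : ContDiff ℝ ((2 : ℕ∞) + 1) f := by norm_num; exact hf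
  exact contDiff_py this
lemma contDiff_px2 (hf : ContDiff ℝ 2 f) : ContDiff ℝ 1 (px f) := by
  have : ContDiff ℝ ((1 : ℕ∞) + 1) f := by norm_num; exact hf
  exact contDiff_px this
lemma contDiff_py2 (hf : ContDiff ℝ 2 f) : ContDiff ℝ 1 (py f) := by
  have : ContDiff ℝ ((1 : ℕ∞) + 1) f := by norm_num; exact hf
  exact contDiff_py this

/-- Clairaut's theorem. -/
lemma px_py_comm (hf : ContDiff ℝ 2 f) (p : ℝ × ℝ) : px (py f) p = py (px f) p := by
  have h1 : ∀ y, HasFDerivAt f (fderiv ℝ f y) y := fun y =>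
    (hf.differentiable (by norm_num) y).hasFDerivAt
  have hd : DifferentiableAt ℝ (fderiv ℝ f) p := by
    have : ContDiff ℝ 1 (fderiv ℝ f) := hf.fderiv_right (by norm_num)
    exact (this.differentiable (by norm_num)) p
  have h2 : HasFDerivAt (fderiv ℝ f) (fderiv ℝ (fderiv ℝ f) p) p := hd.hasFDerivAt
  have hsymm := second_derivative_symmetric h1 h2 ((1:ℝ), (0:ℝ)) ((0:ℝ), (1:ℝ))
  have e1 : px (py f) p = fderiv ℝ (fderiv ℝ f) p (1, 0) (0, 1) := by
    rw [px_def]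
    rw [show py f = fun q => (fderiv ℝ f q) ((fun _ => ((0:ℝ),(1:ℝ))) q) from rfl]
    rw [fderiv_clm_apply hd (differentiableAt_const _)]
    simp
  have e2 : py (px f) p = fderiv ℝ (fderiv ℝ f) p (0, 1) (1, 0) := by
    rw [py_def]
    rw [show px f = fun q => (fderiv ℝ f q) ((fun _ => ((1:ℝ),(0:ℝ))) q) from rfl]
    rw [fderiv_clm_apply hd (differentiableAt_const _)]
    simp
  rw [e1, e2, hsymm]

/-- Derivative along a horizontal slice. -/
lemma hasDerivAt_slice (f : ℝ × ℝ → ℝ) {x c : ℝ} (hf : DifferentiableAt ℝ f (x, c)) :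
    HasDerivAt (fun t => f (t, c)) (px f (x, c)) x := by
  have hline : HasDerivAt (fun t : ℝ => ((t, c) : ℝ × ℝ)) ((1:ℝ), (0:ℝ)) x :=
    HasDerivAt.prodMk (hasDerivAt_id x) (hasDerivAt_const x c)
  exact hf.hasFDerivAt.comp_hasDerivAt x hline

/-- Points on the top boundary are in the closure of the strip. -/
lemma mem_closure_strip (x : ℝ) : ((x, 1) : ℝ × ℝ) ∈ closure stripR := by
  have hseq : Filter.Tendsto (fun n : ℕ => ((x, 1 - 1/((n:ℝ)+2)) : ℝ × ℝ))
      Filter.atTop (nhds (x, 1)) := by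
    apply Filter.Tendsto.prodMk_nhds tendsto_const_nhds
    have h0 : Filter.Tendsto (fun n : ℕ => 1/((n:ℝ)+2)) Filter.atTop (nhds 0) := by
      apply Filter.Tendsto.div_atTop tendsto_const_nhds
      exact Filter.tendsto_atTop_add_const_right _ 2 tendsto_natCast_atTop_atTop
    have := Filter.Tendsto.const_sub (1:ℝ) h0
    simpa using this
  apply mem_closure_of_tendsto hseq
  filter_upwards with n
  have hn : (0:ℝ) < (n:ℝ) + 2 := by positivity
  constructor
  · have : 1/((n:ℝ)+2) < 1 := by rw [div_lt_one hn]; linarith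
    simp only [Set.mem_setOf_eq]
    linarith
  · have : 0 < 1/((n:ℝ)+2) := by positivity
    simp only [Set.mem_setOf_eq]
    linarith

/-- Continuous functions vanishing on the strip vanish on the top boundary. -/
lemma eq_zero_on_top {F : ℝ × ℝ → ℝ} (hF : Continuous F)
    (h : ∀ p ∈ stripR, F p = 0) (x : ℝ) : F (x, 1) = 0 := by
  have : Set.EqOn F (fun _ => (0:ℝ)) (closure stripR) :=
    Set.EqOn.closure (fun p hp => h p hp) hF continuous_const
  exact this (mem_closure_strip x)

lemma le_on_top {F : ℝ × ℝ → ℝ} {c : ℝ} (hF : Continuous F)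
    (h : ∀ p ∈ stripR, c ≤ F p) (x : ℝ) : c ≤ F (x, 1) := by
  have hcl : closure stripR ⊆ {p | c ≤ F p} :=
    closure_minimal (fun p hp => h p hp) (isClosed_le continuous_const hF)
  exact hcl (mem_closure_strip x)

end WWHelpers2

section WWMain

/-- numerator of `v` -/
def NF (η ζ : ℝ × ℝ → ℝ) : ℝ × ℝ → ℝ := fun q => px η q * py ζ q - py η q * px ζ q
/-- denominator of `v` -/
def SF (η : ℝ × ℝ → ℝ) : ℝ × ℝ → ℝ := fun q => px η q ^ 2 + py η q ^ 2
def NXF (η ζ : ℝ × ℝ → ℝ) : ℝ × ℝ → ℝ := fun q =>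
  px (px η) q * py ζ q + px η q * py (px ζ) q
    - (py (px η) q * px ζ q + py η q * px (px ζ) q)
def NYF (η ζ : ℝ × ℝ → ℝ) : ℝ × ℝ → ℝ := fun q =>
  py (px η) q * py ζ q - px η q * px (px ζ) q
    + px (px η) q * px ζ q - py η q * py (px ζ) q
def SXF (η : ℝ × ℝ → ℝ) : ℝ × ℝ → ℝ := fun q =>
  2 * px η q * px (px η) q + 2 * py η q * py (px η) q
def SYF (η : ℝ × ℝ → ℝ) : ℝ × ℝ → ℝ := fun q =>
  2 * px η q * py (px η) q - 2 * py η q * px (px η) q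
def VXF (η ζ : ℝ × ℝ → ℝ) : ℝ × ℝ → ℝ := fun q =>
  (NXF η ζ q * SF η q - NF η ζ q * SXF η q) / SF η q ^ 2
def VYF (η ζ : ℝ × ℝ → ℝ) : ℝ × ℝ → ℝ := fun q =>
  (NYF η ζ q * SF η q - NF η ζ q * SYF η q) / SF η q ^ 2

variable {η ζ : ℝ × ℝ → ℝ}

lemma dfA (hη : ContDiff ℝ 3 η) : Differentiable ℝ (px η) :=
  (contDiff_px3 hη).differentiable (by norm_num)
lemma dfB (hη : ContDiff ℝ 3 η) : Differentiable ℝ (py η) :=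
  (contDiff_py3 hη).differentiable (by norm_num)
lemma dfa1 (hη : ContDiff ℝ 3 η) : Differentiable ℝ (px (px η)) :=
  (contDiff_px2 (contDiff_px3 hη)).differentiable (by norm_num)
lemma dfa2 (hη : ContDiff ℝ 3 η) : Differentiable ℝ (py (px η)) :=
  (contDiff_py2 (contDiff_px3 hη)).differentiable (by norm_num)

lemma dfN (hη : ContDiff ℝ 3 η) (hζ : ContDiff ℝ 3 ζ) : Differentiable ℝ (NF η ζ) :=
  ((dfA hη).mul (dfB hζ)).sub ((dfB hη).mul (dfA hζ))
lemma dfS (hη : ContDiff ℝ 3 η) : Differentiable ℝ (SF η) := by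
  have h1 : Differentiable ℝ (fun q => px η q ^ 2) := fun q => ((dfA hη) q).pow 2
  have h2 : Differentiable ℝ (fun q => py η q ^ 2) := fun q => ((dfB hη) q).pow 2
  exact h1.add h2
lemma dfNX (hη : ContDiff ℝ 3 η) (hζ : ContDiff ℝ 3 ζ) : Differentiable ℝ (NXF η ζ) :=
  (((dfa1 hη).mul (dfB hζ)).add ((dfA hη).mul (dfa2 hζ))).sub
    (((dfa2 hη).mul (dfA hζ)).add ((dfB hη).mul (dfa1 hζ)))
lemma dfNY (hη : ContDiff ℝ 3 η) (hζ : ContDiff ℝ 3 ζ) : Differentiable ℝ (NYF η ζ) :=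
  ((((dfa2 hη).mul (dfB hζ)).sub ((dfA hη).mul (dfa1 hζ))).add
    ((dfa1 hη).mul (dfA hζ))).sub ((dfB hη).mul (dfa2 hζ))
lemma dfSX (hη : ContDiff ℝ 3 η) : Differentiable ℝ (SXF η) :=
  (((differentiable_const 2).mul (dfA hη)).mul (dfa1 hη)).add
    (((differentiable_const 2).mul (dfB hη)).mul (dfa2 hη))
lemma dfSY (hη : ContDiff ℝ 3 η) : Differentiable ℝ (SYF η) :=
  (((differentiable_const 2).mul (dfA hη)).mul (dfa2 hη)).sub
    (((differentiable_const 2).mul (dfB hη)).mul (dfa1 hη))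

/-- global Clairaut for `η` C³: `px (py η) = py (px η)` as functions -/
lemma pxpy_eq (hη : ContDiff ℝ 3 η) : px (py η) = py (px η) :=
  funext fun q => px_py_comm (hη.of_le (by norm_num)) q

lemma px_NF (hη : ContDiff ℝ 3 η) (hζ : ContDiff ℝ 3 ζ) (q : ℝ × ℝ) :
    px (NF η ζ) q = NXF η ζ q := by
  unfold NF NXF
  rw [px_sub ((dfA hη q).fun_mul (dfB hζ q)) ((dfB hη q).fun_mul (dfA hζ q)),
    px_mul (dfA hη q) (dfB hζ q), px_mul (dfB hη q) (dfA hζ q),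
    pxpy_eq hη, pxpy_eq hζ]

lemma px_SF (hη : ContDiff ℝ 3 η) (q : ℝ × ℝ) : px (SF η) q = SXF η q := by
  unfold SF SXF
  rw [px_add ((dfA hη q).fun_pow 2) ((dfB hη q).fun_pow 2), px_sq (dfA hη q), px_sq (dfB hη q),
    pxpy_eq hη]

lemma py_NF (hη : ContDiff ℝ 3 η) (hζ : ContDiff ℝ 3 ζ) {q : ℝ × ℝ}
    (hhη : py (py η) q = -px (px η) q) (hhζ : py (py ζ) q = -px (px ζ) q) :
    py (NF η ζ) q = NYF η ζ q := by
  unfold NF NYF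
  rw [py_sub ((dfA hη q).fun_mul (dfB hζ q)) ((dfB hη q).fun_mul (dfA hζ q)),
    py_mul (dfA hη q) (dfB hζ q), py_mul (dfB hη q) (dfA hζ q), hhη, hhζ]
  ring

lemma py_SF (hη : ContDiff ℝ 3 η) {q : ℝ × ℝ} (hhη : py (py η) q = -px (px η) q) :
    py (SF η) q = SYF η q := by
  unfold SF SYF
  rw [py_add ((dfA hη q).fun_pow 2) ((dfB hη q).fun_pow 2), py_sq (dfA hη q), py_sq (dfB hη q), hhη]
  ring

end WWMain

section WWStrip

variable {η ζ : ℝ × ℝ → ℝ}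

lemma isOpen_stripR : IsOpen stripR := by
  have : stripR = Prod.snd ⁻¹' (Set.Ioo (0:ℝ) 1) := rfl
  rw [this]; exact isOpen_Ioo.preimage continuous_snd

/-- third-order identity from harmonicity on the strip -/
lemma third_harm (hη : ContDiff ℝ 3 η)
    (harmη : ∀ q ∈ stripR, px (px η) q + py (py η) q = 0)
    {p : ℝ × ℝ} (hp : p ∈ stripR) :
    py (py (px η)) p = - px (px (px η)) p := by
  have hev : (fun q => px (px η) q + py (py η) q) =ᶠ[nhds p] (fun _ => (0:ℝ)) := by
    filter_upwards [isOpen_stripR.mem_nhds hp] with q hq using harmη q hq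
  have h0 : fderiv ℝ (fun q => px (px η) q + py (py η) q) p = 0 := by
    rw [hev.fderiv_eq]; exact fderiv_const_apply 0
  have dppy : Differentiable ℝ (py (py η)) :=
    (contDiff_py2 (contDiff_py3 hη)).differentiable (by norm_num)
  have hpx : px (fun q => px (px η) q + py (py η) q) p
      = px (px (px η)) p + px (py (py η)) p := px_add (dfa1 hη p) (dppy p)
  have hz : px (fun q => px (px η) q + py (py η) q) p = 0 := by
    rw [px_def, h0]; rfl
  have hcomm : px (py (py η)) p = py (py (px η)) p := by
    rw [px_py_comm (contDiff_py3 hη) p, pxpy_eq hη]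
  rw [hcomm] at hpx
  linarith [hpx ▸ hz]

end WWStrip

section WWStrip2

variable {η ζ : ℝ × ℝ → ℝ}

lemma px_NXF (hη : ContDiff ℝ 3 η) (hζ : ContDiff ℝ 3 ζ) (p : ℝ × ℝ) :
    px (NXF η ζ) p
      = px (px (px η)) p * py ζ p + px (px η) p * py (px ζ) p
        + (px (px η) p * py (px ζ) p + px η p * py (px (px ζ)) p)
        - (py (px (px η)) p * px ζ p + py (px η) p * px (px ζ) p
          + (py (px η) p * px (px ζ) p + py η p * px (px (px ζ)) p)) := by
  unfold NXF
  rw [px_sub (((dfa1 hη p).fun_mul (dfB hζ p)).fun_add ((dfA hη p).fun_mul (dfa2 hζ p)))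
      (((dfa2 hη p).fun_mul (dfA hζ p)).fun_add ((dfB hη p).fun_mul (dfa1 hζ p))),
    px_add ((dfa1 hη p).fun_mul (dfB hζ p)) ((dfA hη p).fun_mul (dfa2 hζ p)),
    px_add ((dfa2 hη p).fun_mul (dfA hζ p)) ((dfB hη p).fun_mul (dfa1 hζ p)),
    px_mul (dfa1 hη p) (dfB hζ p), px_mul (dfA hη p) (dfa2 hζ p),
    px_mul (dfa2 hη p) (dfA hζ p), px_mul (dfB hη p) (dfa1 hζ p),
    pxpy_eq hζ, pxpy_eq hη, px_py_comm (contDiff_px3 hζ) p, px_py_comm (contDiff_px3 hη) p]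

lemma px_SXF (hη : ContDiff ℝ 3 η) (p : ℝ × ℝ) :
    px (SXF η) p
      = 2 * (px (px η) p * px (px η) p + px η p * px (px (px η)) p)
        + 2 * (py (px η) p * py (px η) p + py η p * py (px (px η)) p) := by
  unfold SXF
  rw [px_add (((differentiable_const 2).fun_mul (dfA hη)) p |>.fun_mul (dfa1 hη p))
      (((differentiable_const 2).fun_mul (dfB hη)) p |>.fun_mul (dfa2 hη p)),
    px_mul (((differentiable_const 2).fun_mul (dfA hη)) p) (dfa1 hη p),
    px_mul (((differentiable_const 2).fun_mul (dfB hη)) p) (dfa2 hη p),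
    px_cmul 2 (dfA hη p), px_cmul 2 (dfB hη p),
    pxpy_eq hη, px_py_comm (contDiff_px3 hη) p]
  ring

lemma py_NYF (hη : ContDiff ℝ 3 η) (hζ : ContDiff ℝ 3 ζ)
    (harmη : ∀ q ∈ stripR, px (px η) q + py (py η) q = 0)
    (harmζ : ∀ q ∈ stripR, px (px ζ) q + py (py ζ) q = 0)
    {p : ℝ × ℝ} (hp : p ∈ stripR) :
    py (NYF η ζ) p
      = -(px (px (px η)) p) * py ζ p - py (px η) p * px (px ζ) p
        - (py (px η) p * px (px ζ) p + px η p * py (px (px ζ)) p)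
        + (py (px (px η)) p * px ζ p + px (px η) p * py (px ζ) p)
        - (-(px (px η) p) * py (px ζ) p + py η p * (-(px (px (px ζ)) p))) := by
  have hhη : py (py η) p = -px (px η) p := by linarith [harmη p hp]
  have hhζ : py (py ζ) p = -px (px ζ) p := by linarith [harmζ p hp]
  have T1 := third_harm hη harmη hp
  have T2 := third_harm hζ harmζ hp
  unfold NYF
  rw [py_sub ((((dfa2 hη).fun_mul (dfB hζ)).fun_sub ((dfA hη).fun_mul (dfa1 hζ))).fun_add
        ((dfa1 hη).fun_mul (dfA hζ)) |>.differentiableAt (x := p))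
      ((dfB hη p).fun_mul (dfa2 hζ p)),
    py_add (((dfa2 hη).fun_mul (dfB hζ)).fun_sub ((dfA hη).fun_mul (dfa1 hζ)) |>.differentiableAt (x := p))
      ((dfa1 hη p).fun_mul (dfA hζ p)),
    py_sub ((dfa2 hη p).fun_mul (dfB hζ p)) ((dfA hη p).fun_mul (dfa1 hζ p)),
    py_mul (dfa2 hη p) (dfB hζ p), py_mul (dfA hη p) (dfa1 hζ p),
    py_mul (dfa1 hη p) (dfA hζ p), py_mul (dfB hη p) (dfa2 hζ p),
    T1, T2, hhη, hhζ]
  ring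

lemma py_SYF (hη : ContDiff ℝ 3 η)
    (harmη : ∀ q ∈ stripR, px (px η) q + py (py η) q = 0)
    {p : ℝ × ℝ} (hp : p ∈ stripR) :
    py (SYF η) p
      = 2 * (py (px η) p * py (px η) p + px η p * (-(px (px (px η)) p)))
        - 2 * (-(px (px η) p) * px (px η) p + py η p * py (px (px η)) p) := by
  have hhη : py (py η) p = -px (px η) p := by linarith [harmη p hp]
  have T1 := third_harm hη harmη hp
  unfold SYF
  rw [py_sub (((differentiable_const 2).fun_mul (dfA hη)) p |>.fun_mul (dfa2 hη p))
      (((differentiable_const 2).fun_mul (dfB hη)) p |>.fun_mul (dfa1 hη p)),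
    py_mul (((differentiable_const 2).fun_mul (dfA hη)) p) (dfa2 hη p),
    py_mul (((differentiable_const 2).fun_mul (dfB hη)) p) (dfa1 hη p),
    py_cmul 2 (dfA hη p), py_cmul 2 (dfB hη p),
    T1, hhη]
  ring

end WWStrip2

section WWStrip3

variable {η ζ : ℝ × ℝ → ℝ}

lemma harmonic_v (hη : ContDiff ℝ 3 η) (hζ : ContDiff ℝ 3 ζ)
    (harmη : ∀ q ∈ stripR, px (px η) q + py (py η) q = 0)
    (harmζ : ∀ q ∈ stripR, px (px ζ) q + py (py ζ) q = 0)
    (hSstrip : ∀ q ∈ stripR, SF η q ≠ 0)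
    {v : ℝ × ℝ → ℝ} (hv : v = fun q => NF η ζ q / SF η q)
    {p : ℝ × ℝ} (hp : p ∈ stripR) :
    px (px v) p + py (py v) p = 0 := by
  have hS : SF η p ≠ 0 := hSstrip p hp
  have hhη : ∀ q ∈ stripR, py (py η) q = -px (px η) q := fun q hq => by linarith [harmη q hq]
  have hhζ : ∀ q ∈ stripR, py (py ζ) q = -px (px ζ) q := fun q hq => by linarith [harmζ q hq]
  have hevx : px v =ᶠ[nhds p] VXF η ζ := by
    filter_upwards [isOpen_stripR.mem_nhds hp] with q hq
    rw [hv, px_div (dfN hη hζ q) (dfS hη q) (hSstrip q hq), px_NF hη hζ q, px_SF hη q]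
    rfl
  have hevy : py v =ᶠ[nhds p] VYF η ζ := by
    filter_upwards [isOpen_stripR.mem_nhds hp] with q hq
    rw [hv, py_div (dfN hη hζ q) (dfS hη q) (hSstrip q hq),
      py_NF hη hζ (hhη q hq) (hhζ q hq), py_SF hη (hhη q hq)]
    rfl
  have e1 : px (px v) p = px (VXF η ζ) p := by
    rw [px_def, px_def, hevx.fderiv_eq]
  have e2 : py (py v) p = py (VYF η ζ) p := by
    rw [py_def, py_def, hevy.fderiv_eq]
  rw [e1, e2]
  have dS2 : DifferentiableAt ℝ (fun q => SF η q ^ 2) p := ((dfS hη) p).pow 2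
  have hS2 : SF η p ^ 2 ≠ 0 := pow_ne_zero _ hS
  unfold VXF VYF
  rw [px_div (((dfNX hη hζ p).fun_mul (dfS hη p)).fun_sub ((dfN hη hζ p).fun_mul (dfSX hη p))) dS2 hS2,
    py_div (((dfNY hη hζ p).fun_mul (dfS hη p)).fun_sub ((dfN hη hζ p).fun_mul (dfSY hη p))) dS2 hS2,
    px_sub ((dfNX hη hζ p).fun_mul (dfS hη p)) ((dfN hη hζ p).fun_mul (dfSX hη p)),
    py_sub ((dfNY hη hζ p).fun_mul (dfS hη p)) ((dfN hη hζ p).fun_mul (dfSY hη p)),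
    px_mul (dfNX hη hζ p) (dfS hη p), px_mul (dfN hη hζ p) (dfSX hη p),
    py_mul (dfNY hη hζ p) (dfS hη p), py_mul (dfN hη hζ p) (dfSY hη p),
    px_sq (dfS hη p), py_sq (dfS hη p),
    px_NF hη hζ p, px_SF hη p,
    py_NF hη hζ (hhη p hp) (hhζ p hp), py_SF hη (hhη p hp),
    px_NXF hη hζ p, px_SXF hη p,
    py_NYF hη hζ harmη harmζ hp, py_SYF hη harmη hp]
  unfold NF SF NXF NYF SXF SYF
  field_simp
  ring_nf

end WWStrip3

section WWSurf

variable {η ζ : ℝ × ℝ → ℝ} {γ α : ℝ}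

lemma surface_cond (hη : ContDiff ℝ 3 η) (hζ : ContDiff ℝ 3 ζ)
    (harmη : ∀ q ∈ stripR, px (px η) q + py (py η) q = 0)
    (harmζ : ∀ q ∈ stripR, px (px ζ) q + py (py ζ) q = 0)
    (kin : ∀ x : ℝ, ζ (x, 1) = 1 - γ / 2 - γ / 2 * (η (x, 1)) ^ 2)
    (dyn : ∀ x : ℝ, (py ζ (x, 1) + γ * η (x, 1) * py η (x, 1)) ^ 2
      = (1 - 2 * α * (η (x, 1) - 1)) * ((px η (x, 1)) ^ 2 + (py η (x, 1)) ^ 2))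
    (nond : ∃ c > 0, ∀ p ∈ stripR,
      c ≤ (1 - 2 * α * (η p - 1)) ^ 2 * ((px η p) ^ 2 + (py η p) ^ 2))
    {u v : ℝ × ℝ → ℝ}
    (hu : ∀ p : ℝ × ℝ, u p =
      (px η p * px ζ p + py η p * py ζ p) / ((px η p) ^ 2 + (py η p) ^ 2) + γ * η p)
    (hv : v = fun q => NF η ζ q / SF η q) (x : ℝ) :
    u (x, 1) * (u (x, 1) * py v (x, 1) - v (x, 1) * px v (x, 1))
      - py η (x, 1) * (γ * u (x, 1) + α) * v (x, 1) = 0 := by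
  -- boundary harmonicity
  have contH : Continuous (fun q => px (px η) q + py (py η) q) :=
    ((contDiff_px2 (contDiff_px3 hη)).continuous).add
      ((contDiff_py2 (contDiff_py3 hη)).continuous)
  have contHζ : Continuous (fun q => px (px ζ) q + py (py ζ) q) :=
    ((contDiff_px2 (contDiff_px3 hζ)).continuous).add
      ((contDiff_py2 (contDiff_py3 hζ)).continuous)
  have hhηx : py (py η) (x, 1) = -px (px η) (x, 1) := by
    have := eq_zero_on_top contH harmη x; linarith
  have hhζx : py (py ζ) (x, 1) = -px (px ζ) (x, 1) := by
    have := eq_zero_on_top contHζ harmζ x; linarith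
  -- nondegeneracy on the boundary
  obtain ⟨c, hc, hnd⟩ := nond
  have contQ : Continuous (fun q =>
      (1 - 2 * α * (η q - 1)) ^ 2 * ((px η q) ^ 2 + (py η q) ^ 2)) := by
    have h1 : Continuous η := hη.continuous
    have h2 : Continuous (px η) := (contDiff_px3 hη).continuous
    have h3 : Continuous (py η) := (contDiff_py3 hη).continuous
    continuity
  have hcx : c ≤ (1 - 2 * α * (η (x, 1) - 1)) ^ 2
      * ((px η (x, 1)) ^ 2 + (py η (x, 1)) ^ 2) :=
    le_on_top contQ (fun p hp => hnd p hp) x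
  have hSx : (px η (x, 1)) ^ 2 + (py η (x, 1)) ^ 2 ≠ 0 := by
    intro h0; rw [h0] at hcx; nlinarith
  have hQx : (1 - 2 * α * (η (x, 1) - 1)) ≠ 0 := by
    intro h0; rw [h0] at hcx; nlinarith
  have hPx : py ζ (x, 1) + γ * η (x, 1) * py η (x, 1) ≠ 0 := by
    intro h0
    have hd := dyn x
    rw [h0] at hd
    have : (1 - 2 * α * (η (x, 1) - 1)) * ((px η (x, 1)) ^ 2 + (py η (x, 1)) ^ 2) = 0 := by
      rw [← hd]; ring
    rcases mul_eq_zero.mp this with h | h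
    · exact hQx h
    · exact hSx h
  -- slice derivatives
  have dfη : Differentiable ℝ η := hη.differentiable (by norm_num)
  have dfζ : Differentiable ℝ ζ := hζ.differentiable (by norm_num)
  have Hs : ∀ y : ℝ, HasDerivAt (fun t => η (t, 1)) (px η (y, 1)) y :=
    fun y => hasDerivAt_slice η (dfη _)
  have HZ : ∀ y : ℝ, HasDerivAt (fun t => ζ (t, 1)) (px ζ (y, 1)) y :=
    fun y => hasDerivAt_slice ζ (dfζ _)
  have HA : ∀ y : ℝ, HasDerivAt (fun t => px η (t, 1)) (px (px η) (y, 1)) y :=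
    fun y => hasDerivAt_slice (px η) (dfA hη _)
  have HB : ∀ y : ℝ, HasDerivAt (fun t => py η (t, 1)) (py (px η) (y, 1)) y := by
    intro y
    have h := hasDerivAt_slice (py η) (dfB hη (y, 1))
    rwa [pxpy_eq hη] at h
  have HC : ∀ y : ℝ, HasDerivAt (fun t => px ζ (t, 1)) (px (px ζ) (y, 1)) y :=
    fun y => hasDerivAt_slice (px ζ) (dfA hζ _)
  have HD : ∀ y : ℝ, HasDerivAt (fun t => py ζ (t, 1)) (py (px ζ) (y, 1)) y := by
    intro y
    have h := hasDerivAt_slice (py ζ) (dfB hζ (y, 1))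
    rwa [pxpy_eq hζ] at h
  -- differentiate the kinematic condition
  have hfun1 : (fun t => ζ (t, 1)) = (fun t => 1 - γ / 2 - γ / 2 * (η (t, 1)) ^ 2) :=
    funext kin
  have hCall : ∀ y : ℝ, px ζ (y, 1) = -γ * η (y, 1) * px η (y, 1) := by
    intro y
    have HR1 := (((Hs y).pow 2).const_mul (γ / 2)).const_sub (1 - γ / 2)
    have h := (hfun1 ▸ HZ y).unique HR1
    rw [h]; push_cast; ring
  have hfun2 : (fun t => px ζ (t, 1)) = (fun t => -γ * η (t, 1) * px η (t, 1)) :=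
    funext hCall
  have hc1x : px (px ζ) (x, 1)
      = -γ * ((px η (x, 1)) ^ 2 + η (x, 1) * px (px η) (x, 1)) := by
    have HR2 := ((Hs x).const_mul (-γ)).mul (HA x)
    have h := (hfun2 ▸ HC x).unique HR2
    rw [h]; ring
  -- differentiate the dynamic condition
  have hfun3 : (fun t => (py ζ (t, 1) + γ * η (t, 1) * py η (t, 1)) ^ 2)
      = (fun t => (1 - 2 * α * (η (t, 1) - 1)) * ((px η (t, 1)) ^ 2 + (py η (t, 1)) ^ 2)) :=
    funext dyn
  have hR4 : 2 * (py ζ (x, 1) + γ * η (x, 1) * py η (x, 1))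
        * (py (px ζ) (x, 1) + γ * (px η (x, 1) * py η (x, 1) + η (x, 1) * py (px η) (x, 1)))
      = -2 * α * px η (x, 1) * ((px η (x, 1)) ^ 2 + (py η (x, 1)) ^ 2)
        + (1 - 2 * α * (η (x, 1) - 1))
          * (2 * px η (x, 1) * px (px η) (x, 1) + 2 * py η (x, 1) * py (px η) (x, 1)) := by
    have HL := ((HD x).fun_add (((Hs x).const_mul γ).fun_mul (HB x))).fun_pow 2
    have HR := ((((Hs x).sub_const 1).const_mul (2 * α)).const_sub 1).fun_mul
      (((HA x).fun_pow 2).fun_add ((HB x).fun_pow 2))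
    have h := (hfun3 ▸ HL).unique HR
    push_cast at h
    linear_combination h
  -- values of the derivatives of v at the surface point
  have hSxSF : SF η (x, 1) ≠ 0 := hSx
  have hvxval : px v (x, 1) = VXF η ζ (x, 1) := by
    rw [hv, px_div (dfN hη hζ _) (dfS hη _) hSxSF, px_NF hη hζ, px_SF hη]
    rfl
  have hvyval : py v (x, 1) = VYF η ζ (x, 1) := by
    rw [hv, py_div (dfN hη hζ _) (dfS hη _) hSxSF, py_NF hη hζ hhηx hhζx, py_SF hη hhηx]
    rfl
  have hvval : v (x, 1) = NF η ζ (x, 1) / SF η (x, 1) := by rw [hv]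
  rw [hvxval, hvyval, hvval, hu (x, 1)]
  simp only [VXF, VYF, NXF, NYF, SXF, SYF, NF, SF]
  rw [hCall x, hc1x]
  -- final algebraic identity
  trans ((py η (x, 1) * (py ζ (x, 1) + γ * η (x, 1) * py η (x, 1)))
      / ((px η (x, 1)) ^ 2 + (py η (x, 1)) ^ 2) ^ 2)
    * (((px η (x, 1) * px (px η) (x, 1) + py η (x, 1) * py (px η) (x, 1))
        * ((py ζ (x, 1) + γ * η (x, 1) * py η (x, 1)) ^ 2
          - (1 - 2 * α * (η (x, 1) - 1)) * ((px η (x, 1)) ^ 2 + (py η (x, 1)) ^ 2))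
      - (((px η (x, 1)) ^ 2 + (py η (x, 1)) ^ 2) / 2)
        * (2 * (py ζ (x, 1) + γ * η (x, 1) * py η (x, 1))
            * (py (px ζ) (x, 1) + γ * (px η (x, 1) * py η (x, 1)
              + η (x, 1) * py (px η) (x, 1)))
          + 2 * α * px η (x, 1) * ((px η (x, 1)) ^ 2 + (py η (x, 1)) ^ 2)
          - (1 - 2 * α * (η (x, 1) - 1))
            * (2 * px η (x, 1) * px (px η) (x, 1) + 2 * py η (x, 1) * py (px η) (x, 1))))
      / ((px η (x, 1)) ^ 2 + (py η (x, 1)) ^ 2))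
  · field_simp
    ring
  · have z3 : (py ζ (x, 1) + γ * η (x, 1) * py η (x, 1)) ^ 2
        - (1 - 2 * α * (η (x, 1) - 1)) * ((px η (x, 1)) ^ 2 + (py η (x, 1)) ^ 2) = 0 := by
      linear_combination dyn x
    have z4 : 2 * (py ζ (x, 1) + γ * η (x, 1) * py η (x, 1))
          * (py (px ζ) (x, 1) + γ * (px η (x, 1) * py η (x, 1)
            + η (x, 1) * py (px η) (x, 1)))
        + 2 * α * px η (x, 1) * ((px η (x, 1)) ^ 2 + (py η (x, 1)) ^ 2)
        - (1 - 2 * α * (η (x, 1) - 1))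
          * (2 * px η (x, 1) * px (px η) (x, 1) + 2 * py η (x, 1) * py (px η) (x, 1)) = 0 := by
      linear_combination hR4
    rw [z3, z4]
    ring

end WWSurf

/-- A solution of the conformal water-wave system with dimensionless vorticity `γ`
and wave-speed parameter `α`. -/
structure IsWWSolution (γ α : ℝ) (η ζ : ℝ × ℝ → ℝ) : Prop where
  smooth_η : ContDiff ℝ 3 η
  smooth_ζ : ContDiff ℝ 3 ζ
  bdd : ∀ n : ℕ, n ≤ 3 → ∃ C : ℝ, ∀ p : ℝ × ℝ, p.2 ∈ Set.Icc (0:ℝ) 1 →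
    ‖iteratedFDeriv ℝ n η p‖ + ‖iteratedFDeriv ℝ n ζ p‖ ≤ C
  harm_η : ∀ p ∈ stripR, px (px η) p + py (py η) p = 0
  harm_ζ : ∀ p ∈ stripR, px (px ζ) p + py (py ζ) p = 0
  kinematic : ∀ x : ℝ, ζ (x, 1) = 1 - γ / 2 - (γ / 2) * (η (x, 1)) ^ 2
  dynamic : ∀ x : ℝ,
    (py ζ (x, 1) + γ * η (x, 1) * py η (x, 1)) ^ 2
      = (1 - 2 * α * (η (x, 1) - 1)) * ((px η (x, 1)) ^ 2 + (py η (x, 1)) ^ 2)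
  bottom_η : ∀ x : ℝ, η (x, 0) = 0
  bottom_ζ : ∀ x : ℝ, ζ (x, 0) = 0
  decay : ∀ n : ℕ, n ≤ 2 → ∀ ε > 0, ∃ M : ℝ, ∀ p : ℝ × ℝ,
    M ≤ |p.1| → p.2 ∈ Set.Icc (0:ℝ) 1 →
      ‖iteratedFDeriv ℝ n (fun q => η q - q.2) p‖
        + ‖iteratedFDeriv ℝ n (fun q => ζ q - (1 - γ) * q.2) p‖ ≤ ε
  nondeg : ∃ c > 0, ∀ p ∈ stripR,
    c ≤ (1 - 2 * α * (η p - 1)) ^ 2 * ((px η p) ^ 2 + (py η p) ^ 2)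

/-- The vertical velocity `v` is harmonic, vanishes on the bottom, and
satisfies the boundary condition `u(u v_y − v v_x) − η_y(γu + α)v = 0` on the
surface. -/
theorem vertical_velocity_problem (γ α : ℝ) (η ζ : ℝ × ℝ → ℝ)
    (hsol : IsWWSolution γ α η ζ) (u v : ℝ × ℝ → ℝ)
    (hu : ∀ p : ℝ × ℝ, u p =
      (px η p * px ζ p + py η p * py ζ p) / ((px η p) ^ 2 + (py η p) ^ 2) + γ * η p)
    (hv : ∀ p : ℝ × ℝ, v p =
      (px η p * py ζ p - py η p * px ζ p) / ((px η p) ^ 2 + (py η p) ^ 2)) :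
    (∀ p ∈ stripR, px (px v) p + py (py v) p = 0) ∧
    (∀ x : ℝ, v (x, 0) = 0) ∧
    (∀ x : ℝ, u (x, 1) * (u (x, 1) * py v (x, 1) - v (x, 1) * px v (x, 1))
      - py η (x, 1) * (γ * u (x, 1) + α) * v (x, 1) = 0) := by
  have hη := hsol.smooth_η
  have hζ := hsol.smooth_ζ
  have hvfun : v = fun q => NF η ζ q / SF η q := funext fun p => hv p
  have hSstrip : ∀ q ∈ stripR, SF η q ≠ 0 := by
    intro q hq
    obtain ⟨c, hc, hnd⟩ := hsol.nondeg
    have h := hnd q hq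
    intro h0
    have h0' : (px η q) ^ 2 + (py η q) ^ 2 = 0 := h0
    rw [h0'] at h
    nlinarith
  refine ⟨fun p hp => harmonic_v hη hζ hsol.harm_η hsol.harm_ζ hSstrip hvfun hp, ?_, ?_⟩
  · -- bottom condition
    intro x
    have hA0 : px η (x, 0) = 0 := by
      have h1 : HasDerivAt (fun t => η (t, 0)) (px η (x, 0)) x :=
        hasDerivAt_slice η ((hη.differentiable (by norm_num)) _)
      have hfun : (fun t => η (t, 0)) = (fun _ : ℝ => (0:ℝ)) := funext hsol.bottom_η
      exact (hfun ▸ h1).unique (hasDerivAt_const x 0)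
    have hC0 : px ζ (x, 0) = 0 := by
      have h1 : HasDerivAt (fun t => ζ (t, 0)) (px ζ (x, 0)) x :=
        hasDerivAt_slice ζ ((hζ.differentiable (by norm_num)) _)
      have hfun : (fun t => ζ (t, 0)) = (fun _ : ℝ => (0:ℝ)) := funext hsol.bottom_ζ
      exact (hfun ▸ h1).unique (hasDerivAt_const x 0)
    rw [hv (x, 0), hA0, hC0]
    simp
  · -- surface condition
    exact surface_cond hη hζ hsol.harm_η hsol.harm_ζ hsol.kinematic hsol.dynamic
      hsol.nondeg hu hvfun
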